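/- arXiv:1408.3064 — 2 statements merged into one kernel-verified Lean document; each statement's English description precedes it below -/
import Mathlib

section
/- Assume that for every invertible measure-preserving system (Ω, G, ν, S) on a probability space, all bounded measurable G1, G2 : Ω → ℂ, and all integers a, b, there exists a set of full ν-measure on which the averages (1/N) Σ_{n=1}^{N} G1(S^{an}ω) G2(S^{bn}ω) e^{2πi n s} converge for every s ∈ ℝ as N → ∞. Then for every invertible measure-preserving system (X, F, μ, T) on a probability space, all f1, f2 ∈ L^∞(μ), all integers a ≠ b, every polynomial p of degree 2 with real coefficients, and every t ∈ ℝ, the averages (1/N) Σ_{n=1}^{N} f1(T^{an}x) f2(T^{bn}x) e^{2πi p(n) t} converge for μ-almost every x as N → ∞. -/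
/-!
Write `e(r) = exp(2πir)`. Lift `T` to the skew product `S (x, θ, φ) = (T x, θ + α, φ + 2θ + α)`
on `X × 𝕋²`, which preserves `μ ⊗ Haar` and has iterates
`Sᵐ (x, θ, φ) = (Tᵐ x, θ + mα, φ + 2mθ + m²α)`. For the observables `Gᵢ (x, θ, φ) = gᵢ x · e(φ)`,
with `gᵢ` bounded versions of `fᵢ`, the product `G₁(S^{an}) G₂(S^{bn})` is
`g₁(T^{an} x) g₂(T^{bn} x) e(2φ + 2(a + b)nθ + (a² + b²)n²α)`. Since `a ≠ b`, `a² + b² ≠ 0`, so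
`α` can be chosen with `(a² + b²)α = p₂t`, and the linear phase `2(a + b)nθ` is absorbed into the
frequency `s = p₁t - 2(a + b)θ`. The linear theorem gives convergence on a full-measure set of
`X × 𝕋²`; for almost every `x` it contains some `(x, θ, φ)`, and at that point the linear averages
are the quadratic averages of `f₁, f₂` at `x` times the constant `e(2φ - p₀t)`.
-/

open MeasureTheory Filter AddCircle

universe u

local notation "𝕋²" => UnitAddCircle × UnitAddCircle

theorem Equiv.Perm.zpow_apply_eq_of_apply_succ {β : Type*} {σ : Equiv.Perm β} {F : ℤ → β → β}
    (h₀ : ∀ x, F 0 x = x) (h_succ : ∀ m x, F (m + 1) x = F m (σ x)) (m : ℤ) (x : β) :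
    (σ ^ m) x = F m x := by
  induction m using Int.induction_on generalizing x with
  | zero => simp [h₀]
  | succ k ih => rw [zpow_add_one, Equiv.Perm.mul_apply, ih, h_succ]
  | pred k ih =>
    have h := h_succ (-k - 1) (σ⁻¹ x)
    rw [sub_add_cancel, ← Equiv.Perm.mul_apply, mul_inv_cancel, Equiv.Perm.one_apply] at h
    rw [zpow_sub_one, Equiv.Perm.mul_apply, ih, h]

section MeasurePreserving

variable {X : Type*} [MeasurableSpace X] {μ : Measure X} {T : X ≃ᵐ X}

theorem MeasureTheory.MeasurePreserving.toEquiv_zpow (hT : MeasurePreserving T μ μ) (m : ℤ) :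
    MeasurePreserving (T.toEquiv ^ m : Equiv.Perm X) μ μ := by
  induction m using Int.induction_on with
  | zero => exact MeasurePreserving.id μ
  | succ k ih => rw [zpow_add_one]; exact ih.comp hT
  | pred k ih => rw [zpow_sub_one]; exact ih.comp (hT.symm T)

theorem MeasureTheory.MeasurePreserving.ae_forall_zpow_apply_eq {Y : Type*} {f g : X → Y}
    (hT : MeasurePreserving T μ μ) (hfg : f =ᵐ[μ] g) :
    ∀ᵐ x ∂μ, ∀ m : ℤ, f ((T.toEquiv ^ m) x) = g ((T.toEquiv ^ m) x) :=
  ae_all_iff.2 fun m => hfg.comp_tendsto (hT.toEquiv_zpow m).quasiMeasurePreserving.tendsto_ae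

end MeasurePreserving

theorem MeasureTheory.MemLp.exists_measurable_bounded_ae_eq {X E : Type*} [MeasurableSpace X]
    {μ : Measure X} [NormedAddCommGroup E] [MeasurableSpace E] [BorelSpace E] {f : X → E}
    (hf : MemLp f ⊤ μ) : ∃ g : X → E, Measurable g ∧ (∃ C : ℝ, ∀ x, ‖g x‖ ≤ C) ∧ f =ᵐ[μ] g := by
  obtain ⟨g, hg, hfg⟩ := hf.1.aemeasurable
  set s := {x | ‖g x‖ ≤ lpNorm f ⊤ μ}
  refine ⟨s.indicator g, hg.indicator (measurableSet_le hg.norm measurable_const),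
    ⟨lpNorm f ⊤ μ, fun x => ?_⟩, ?_⟩
  · rw [norm_indicator_eq_indicator_norm]
    exact Set.indicator_apply_le' id fun _ => lpNorm_nonneg
  · filter_upwards [ae_le_lpNorm_exponent_top hf, hfg] with x hle heq
    rw [heq] at hle
    rw [Set.indicator_of_mem (s := s) hle, heq]

theorem Polynomial.eval_eq_of_natDegree_le_two {p : Polynomial ℝ} (hp : p.natDegree ≤ 2) (r : ℝ) :
    p.eval r = p.coeff 0 + p.coeff 1 * r + p.coeff 2 * r ^ 2 := by
  simp [p.eval_eq_sum_range' (Nat.lt_succ_of_le hp), Finset.sum_range_succ]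

theorem fourier_one_coe (r : ℝ) :
    fourier 1 (r : UnitAddCircle) = Complex.exp (2 * Real.pi * Complex.I * r) := by
  rw [fourier_coe_apply]; simp

def quadraticSkew (α : UnitAddCircle) : 𝕋² ≃ᵐ 𝕋² where
  toFun y := (y.1 + α, y.2 + 2 • y.1 + α)
  invFun y := (y.1 - α, y.2 - 2 • (y.1 - α) - α)
  left_inv y := by ext <;> simp; abel
  right_inv y := by ext <;> simp; abel
  measurable_toFun := by
    change Measurable fun y : 𝕋² => (y.1 + α, y.2 + 2 • y.1 + α); fun_prop
  measurable_invFun := by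
    change Measurable fun y : 𝕋² => (y.1 - α, y.2 - 2 • (y.1 - α) - α); fun_prop

theorem measurePreserving_quadraticSkew (α : UnitAddCircle) :
    MeasurePreserving (quadraticSkew α) (haarAddCircle.prod haarAddCircle)
      (haarAddCircle.prod haarAddCircle) :=
  (measurePreserving_add_right _ α).skew_product (g := fun θ φ => φ + 2 • θ + α) (by fun_prop)
    (ae_of_all _ fun θ => by
      simpa only [add_assoc] using (measurePreserving_add_right haarAddCircle (2 • θ + α)).map_eq)

section PhaseLift

variable {X : Type*}

noncomputable def phaseLift (g : X → ℂ) (w : X × 𝕋²) : ℂ := g w.1 * fourier 1 w.2.2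

theorem norm_phaseLift (g : X → ℂ) (w : X × 𝕋²) : ‖phaseLift g w‖ = ‖g w.1‖ := by
  rw [phaseLift, norm_mul, fourier_apply, Circle.norm_coe, mul_one]

theorem exists_norm_phaseLift_le {g : X → ℂ} (hg : ∃ C : ℝ, ∀ x, ‖g x‖ ≤ C) :
    ∃ C : ℝ, ∀ w, ‖phaseLift g w‖ ≤ C :=
  hg.imp fun _ hC w => (norm_phaseLift g w).trans_le (hC w.1)

variable [MeasurableSpace X]

theorem Measurable.phaseLift {g : X → ℂ} (hg : Measurable g) : Measurable (phaseLift g) :=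
  (hg.comp measurable_fst).mul ((fourier 1).continuous.measurable.comp measurable_snd.snd)

def quadraticSkewProduct (T : X ≃ᵐ X) (α : UnitAddCircle) : X × 𝕋² ≃ᵐ X × 𝕋² :=
  T.prodCongr (quadraticSkew α)

theorem MeasureTheory.MeasurePreserving.quadraticSkewProduct {μ : Measure X} [SFinite μ]
    {T : X ≃ᵐ X} (hT : MeasurePreserving T μ μ) (α : UnitAddCircle) :
    MeasurePreserving (quadraticSkewProduct T α) (μ.prod (haarAddCircle.prod haarAddCircle))
      (μ.prod (haarAddCircle.prod haarAddCircle)) :=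
  hT.prod (measurePreserving_quadraticSkew α)

theorem quadraticSkewProduct_apply (T : X ≃ᵐ X) (α : UnitAddCircle) (w : X × 𝕋²) :
    quadraticSkewProduct T α w = (T w.1, w.2.1 + α, w.2.2 + 2 • w.2.1 + α) :=
  rfl

theorem quadraticSkewProduct_zpow_apply (T : X ≃ᵐ X) (α : UnitAddCircle) (m : ℤ) (x : X)
    (θ φ : UnitAddCircle) :
    ((quadraticSkewProduct T α).toEquiv ^ m) (x, θ, φ) =
      ((T.toEquiv ^ m) x, θ + m • α, φ + (2 * m) • θ + (m ^ 2) • α) := by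
  refine Equiv.Perm.zpow_apply_eq_of_apply_succ
    (F := fun m w => ((T.toEquiv ^ m) w.1, w.2.1 + m • α, w.2.2 + (2 * m) • w.2.1 + (m ^ 2) • α))
    (fun w => by simp) (fun m w => ?_) m (x, θ, φ)
  simp only [zpow_add_one, Equiv.Perm.mul_apply, MeasurableEquiv.coe_toEquiv,
    quadraticSkewProduct_apply]
  refine Prod.ext rfl (Prod.ext ?_ ?_) <;> module

theorem phaseLift_quadraticSkewProduct_zpow (T : X ≃ᵐ X) (g : X → ℂ) (α θ φ : ℝ) (m : ℤ)
    (x : X) :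
    phaseLift g (((quadraticSkewProduct T α).toEquiv ^ m) (x, θ, φ)) =
      g ((T.toEquiv ^ m) x) *
        Complex.exp (2 * Real.pi * Complex.I * (φ + 2 * m * θ + m ^ 2 * α)) := by
  rw [quadraticSkewProduct_zpow_apply]
  dsimp only [phaseLift]
  rw [← coe_zsmul, ← coe_zsmul, ← coe_add, ← coe_add, fourier_one_coe]
  push_cast [zsmul_eq_mul]; ring_nf

theorem average_phaseLift_quadraticSkewProduct (T : X ≃ᵐ X) (g₁ g₂ : X → ℂ) (a b : ℤ)
    {p : Polynomial ℝ} (hp : p.natDegree ≤ 2) {t α : ℝ}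
    (hα : ((a : ℝ) ^ 2 + (b : ℝ) ^ 2) * α = p.coeff 2 * t) (x : X) (θ φ : ℝ) (N : ℕ) :
    (N : ℂ)⁻¹ * ∑ n ∈ Finset.Icc 1 N,
        phaseLift g₁ (((quadraticSkewProduct T α).toEquiv ^ (a * (n : ℤ))) (x, θ, φ)) *
        phaseLift g₂ (((quadraticSkewProduct T α).toEquiv ^ (b * (n : ℤ))) (x, θ, φ)) *
          Complex.exp (2 * Real.pi * Complex.I * (n : ℝ) * (p.coeff 1 * t - 2 * (a + b) * θ : ℝ)) =
      Complex.exp (2 * Real.pi * Complex.I * (2 * φ - p.coeff 0 * t : ℝ)) *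
        ((N : ℂ)⁻¹ * ∑ n ∈ Finset.Icc 1 N,
          g₁ ((T.toEquiv ^ (a * (n : ℤ))) x) * g₂ ((T.toEquiv ^ (b * (n : ℤ))) x) *
            Complex.exp (2 * Real.pi * Complex.I * (p.eval (n : ℝ)) * t)) := by
  rw [mul_left_comm (Complex.exp _)]
  congr 1
  rw [Finset.mul_sum]
  refine Finset.sum_congr rfl fun n _ => ?_
  simp only [phaseLift_quadraticSkewProduct_zpow, p.eval_eq_of_natDegree_le_two hp]
  have hαℂ : ((a : ℂ) ^ 2 + (b : ℂ) ^ 2) * α = p.coeff 2 * t := by exact_mod_cast hα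
  have hphase : ∀ u v A B C K D : ℂ, A + B + C = K + D →
      u * Complex.exp A * (v * Complex.exp B) * Complex.exp C =
        Complex.exp K * (u * v * Complex.exp D) := by
    intro u v A B C K D h
    rw [mul_mul_mul_comm, mul_assoc, ← Complex.exp_add, ← Complex.exp_add, h, Complex.exp_add]
    ring
  exact hphase _ _ _ _ _ _ _ (by
    push_cast
    linear_combination (2 * Real.pi * Complex.I * (n : ℂ) ^ 2) * hαℂ)

end PhaseLift

/-- If the linear Wiener-Wintner double recurrence theorem holds (for every invertible
measure-preserving system and bounded measurable `G1, G2` there is a full-measure set on which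
`(1/N) ∑_{n=1}^N G1(S^{an}ω) G2(S^{bn}ω) e^{2πi n s}` converges for every `s ∈ ℝ`), then for any
invertible measure-preserving system, `f1, f2 ∈ L^∞(μ)`, integers `a ≠ b`, any real polynomial
`p` of degree `2` and any `t ∈ ℝ`, the averages
`(1/N) ∑_{n=1}^N f1(T^{an}x) f2(T^{bn}x) e^{2πi p(n) t}` converge μ-a.e. -/
theorem wiener_wintner_deg_two_of_linear_wiener_wintner
    (hyp : ∀ (Ω : Type u) [MeasurableSpace Ω] (ν : Measure Ω) [IsProbabilityMeasure ν]
      (S : Ω ≃ᵐ Ω), MeasurePreserving S ν ν →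
        ∀ (G1 G2 : Ω → ℂ), Measurable G1 → Measurable G2 →
          (∃ C : ℝ, ∀ ω, ‖G1 ω‖ ≤ C) → (∃ C : ℝ, ∀ ω, ‖G2 ω‖ ≤ C) →
            ∀ a b : ℤ, ∃ V : Set Ω, MeasurableSet V ∧ ν V = 1 ∧
              ∀ ω ∈ V, ∀ s : ℝ, ∃ L : ℂ,
                Tendsto (fun N : ℕ => (N : ℂ)⁻¹ * ∑ n ∈ Finset.Icc 1 N,
                    G1 ((S.toEquiv ^ (a * (n : ℤ))) ω) * G2 ((S.toEquiv ^ (b * (n : ℤ))) ω) *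
                      Complex.exp (2 * Real.pi * Complex.I * (n : ℝ) * s))
                  atTop (nhds L)) :
    ∀ (X : Type u) [MeasurableSpace X] (μ : Measure X) [IsProbabilityMeasure μ]
      (T : X ≃ᵐ X), MeasurePreserving T μ μ →
        ∀ (f1 f2 : X → ℂ), MemLp f1 ⊤ μ → MemLp f2 ⊤ μ →
          ∀ (a b : ℤ), a ≠ b →
            ∀ (p : Polynomial ℝ), p.degree = 2 → ∀ (t : ℝ),
              ∀ᵐ x ∂μ, ∃ L : ℂ,
                Tendsto (fun N : ℕ => (N : ℂ)⁻¹ * ∑ n ∈ Finset.Icc 1 N,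
                    f1 ((T.toEquiv ^ (a * (n : ℤ))) x) * f2 ((T.toEquiv ^ (b * (n : ℤ))) x) *
                      Complex.exp (2 * Real.pi * Complex.I * (p.eval (n : ℝ)) * t))
                  atTop (nhds L) := by
  intro X _ μ _ T hT f1 f2 hf1 hf2 a b hab p hp t
  obtain ⟨g₁, hg₁, hg₁_bdd, hfg₁⟩ := hf1.exists_measurable_bounded_ae_eq
  obtain ⟨g₂, hg₂, hg₂_bdd, hfg₂⟩ := hf2.exists_measurable_bounded_ae_eq
  have hab₂ : ((a : ℝ) ^ 2 + (b : ℝ) ^ 2) ≠ 0 := by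
    have : (a : ℝ) ≠ b := by exact_mod_cast hab
    nlinarith [sq_pos_of_ne_zero (sub_ne_zero.2 this), sq_nonneg ((a : ℝ) + b)]
  obtain ⟨α, hα⟩ : ∃ α : ℝ, ((a : ℝ) ^ 2 + (b : ℝ) ^ 2) * α = p.coeff 2 * t :=
    ⟨_, mul_div_cancel₀ _ hab₂⟩
  obtain ⟨V, hV, hV₁, hconv⟩ := hyp _ _ _ (hT.quadraticSkewProduct α)
    (phaseLift g₁) (phaseLift g₂) hg₁.phaseLift hg₂.phaseLift
    (exists_norm_phaseLift_le hg₁_bdd) (exists_norm_phaseLift_le hg₂_bdd) a b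
  have hV_slice : ∀ᵐ x ∂μ, ∃ y, (x, y) ∈ V :=
    (Measure.ae_ae_of_ae_prod ((mem_ae_iff_prob_eq_one hV).2 hV₁)).mono fun _ h => h.exists
  filter_upwards [hT.ae_forall_zpow_apply_eq hfg₁, hT.ae_forall_zpow_apply_eq hfg₂, hV_slice]
    with x h₁ h₂ ⟨⟨θ, φ⟩, hxV⟩
  obtain ⟨θ, rfl⟩ := QuotientAddGroup.mk_surjective θ
  obtain ⟨φ, rfl⟩ := QuotientAddGroup.mk_surjective φ
  obtain ⟨L, hL⟩ := hconv _ hxV (p.coeff 1 * t - 2 * (a + b) * θ)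
  rw [funext (average_phaseLift_quadraticSkewProduct T g₁ g₂ a b
    (p.natDegree_le_of_degree_le hp.le) hα x θ φ)] at hL
  set c := Complex.exp (2 * Real.pi * Complex.I * (2 * φ - p.coeff 0 * t : ℝ))
  refine ⟨c⁻¹ * L, (hL.const_mul c⁻¹).congr fun N => ?_⟩
  simp only [h₁, h₂]
  exact inv_mul_cancel_left₀ (Complex.exp_ne_zero _) _
end

section
/- Let m ≥ 1 be an integer. Assume that for every invertible measure-preserving system (Ω, G, ν, S) on a probability space, all bounded measurable G1, G2 : Ω → ℂ, and all integers a, b, there exists a set of full ν-measure on which the averages (1/N) Σ_{n=1}^{N} G1(S^{an}ω) G2(S^{bn}ω) e^{2πi q(n)} converge for every polynomial q with real coefficients of degree at most m as N → ∞. Then for every invertible measure-preserving system (X, F, μ, T) on a probability space, all f1, f2 ∈ L^∞(μ), all integers a ≠ b, and every t ∈ ℝ, the averages (1/N) Σ_{n=1}^{N} f1(T^{an}x) f2(T^{bn}x) e^{2πi n^{m+1} t} converge for μ-almost every x as N → ∞. -/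
/-!
Assume `b ≠ 0` (otherwise `a ≠ 0` and the roles of `f1` and `f2` can be swapped). A tower of
`m + 1` circle extensions `(y, θ) ↦ (R y, θ + ψ y)` over a point gives a probability-preserving
system `(Y, R)` with a phase `ψ : Y → ℝ/ℤ` whose orbits `n ↦ ψ (R^n y)` are real polynomials `P_y`
of degree `m + 1` with leading coefficient `t / b^(m+1)`: each extension takes a discrete
antiderivative of the phase below. On `X × Y` apply the hypothesis to `G1 = f1 ⊗ 1`,
`G2 = f2 ⊗ e(ψ)` and `q(n) = t n^(m+1) - P_y(b n)`, which has degree at most `m` because the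
leading terms cancel. At `(x, y)` these averages are exactly the monomial averages at `x`, and a
full-measure subset of `X × Y` meets the fibre over almost every `x`.
-/

open MeasureTheory Filter Finset Polynomial

universe u

theorem Equiv.Perm.zpow_add_one_apply {α : Type*} (e : Equiv.Perm α) (n : ℤ) (x : α) :
    (e ^ (n + 1)) x = e ((e ^ n) x) := by
  rw [add_comm, zpow_one_add, Equiv.Perm.mul_apply]

theorem Equiv.Perm.zpow_apply_eq_of_apply_add_one {α : Type*} (e : Equiv.Perm α) {f : ℤ → α}
    (hf : ∀ n, f (n + 1) = e (f n)) (n : ℤ) : (e ^ n) (f 0) = f n := by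
  induction n using Int.induction_on with
  | zero => rfl
  | succ n ih => rw [Equiv.Perm.zpow_add_one_apply, ih, hf]
  | pred n ih =>
    rw [← e.apply_eq_iff_eq, ← Equiv.Perm.zpow_add_one_apply, sub_add_cancel, ih, ← hf,
      sub_add_cancel]

theorem Equiv.prodCongr_zpow_apply {α β : Type*} (e₁ : Equiv.Perm α) (e₂ : Equiv.Perm β) (n : ℤ)
    (x : α) (y : β) : (e₁.prodCongr e₂ ^ n) (x, y) = ((e₁ ^ n) x, (e₂ ^ n) y) :=
  Equiv.Perm.zpow_apply_eq_of_apply_add_one (e₁.prodCongr e₂)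
    (f := fun n ↦ ((e₁ ^ n) x, (e₂ ^ n) y))
    (fun n ↦ by simp only [Equiv.Perm.zpow_add_one_apply, Equiv.prodCongr_apply, Prod.map]) n

namespace MeasureTheory

variable {α : Type*} [MeasurableSpace α] {μ : Measure α}

theorem MeasurePreserving.zpow_toEquiv {T : α ≃ᵐ α} (hT : MeasurePreserving T μ μ) :
    ∀ n : ℤ, MeasurePreserving ⇑(T.toEquiv ^ n) μ μ
  | (n : ℕ) => by simpa [Equiv.Perm.coe_pow] using hT.iterate n
  | .negSucc n => by
    simpa [zpow_negSucc, ← inv_pow, Equiv.Perm.coe_pow] using (hT.symm T).iterate (n + 1)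

theorem MemLp.exists_measurable_bounded_ae_eq_s17 {E : Type*} [NormedAddCommGroup E]
    [MeasurableSpace E] [BorelSpace E] {f : α → E} (hf : MemLp f ⊤ μ) :
    ∃ g : α → E, Measurable g ∧ (∃ C : ℝ, ∀ x, ‖g x‖ ≤ C) ∧ f =ᵐ[μ] g := by
  obtain ⟨C, hC⟩ := eLpNormEssSup_lt_top_iff_isBoundedUnder.1 (by simpa using hf.eLpNorm_lt_top)
  obtain ⟨g, hg, hfg⟩ := hf.aestronglyMeasurable
  replace hg := hg.measurable
  refine ⟨{x | ‖g x‖₊ ≤ C}.indicator g, hg.indicator (measurableSet_le hg.nnnorm measurable_const),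
    ⟨C, fun x ↦ ?_⟩, ?_⟩
  · by_cases hx : ‖g x‖₊ ≤ C
    · rw [Set.indicator_of_mem (show x ∈ {x | ‖g x‖₊ ≤ C} from hx)]
      exact_mod_cast hx
    · simp [hx]
  · filter_upwards [hfg, hC] with x hfgx hfC
    have hgC : x ∈ {x | ‖g x‖₊ ≤ C} := by rw [Set.mem_ofPred_eq, ← hfgx]; exact hfC
    rw [Set.indicator_of_mem hgC, hfgx]

end MeasureTheory

namespace Polynomial

theorem degree_sub_le_of_coeff_eq {R : Type*} [Ring R] {p q : R[X]} {k : ℕ}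
    (hp : p.degree ≤ (k + 1 : ℕ)) (hq : q.degree ≤ (k + 1 : ℕ))
    (h : p.coeff (k + 1) = q.coeff (k + 1)) : (p - q).degree ≤ k := by
  rw [degree_le_iff_coeff_zero]
  intro j hj
  rw [coeff_sub]
  rcases eq_or_ne j (k + 1) with rfl | hjk
  · exact sub_eq_zero.2 h
  · have hkj : ((k + 1 : ℕ) : WithBot ℕ) < j := by
      have : k < j := by exact_mod_cast hj
      exact_mod_cast (by omega : k + 1 < j)
    rw [coeff_eq_zero_of_degree_lt (hp.trans_lt hkj), coeff_eq_zero_of_degree_lt (hq.trans_lt hkj),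
      sub_zero]

theorem degree_X_add_one_pow_sub_X_pow_le {R : Type*} [CommRing R] (j : ℕ) :
    ((X + 1 : R[X]) ^ (j + 1) - X ^ (j + 1)).degree ≤ (j : WithBot ℕ) :=
  degree_sub_le_of_coeff_eq (by compute_degree!) (degree_X_pow_le _)
    (by rw [coeff_X_pow_self, coeff_X_add_one_pow, Nat.choose_self, Nat.cast_one])

theorem coeff_X_add_one_pow_sub_X_pow_self {R : Type*} [CommRing R] (j : ℕ) :
    ((X + 1 : R[X]) ^ (j + 1) - X ^ (j + 1)).coeff j = (j + 1 : R) := by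
  simp [coeff_X_add_one_pow, coeff_X_pow]

theorem degree_comp_C_mul_X_le {R : Type*} [Semiring R] {P : R[X]} {n : ℕ} (hP : P.degree ≤ n)
    (b : R) : (P.comp (C b * X)).degree ≤ n := by
  rw [degree_le_iff_coeff_zero] at hP ⊢
  intro j hj
  rw [comp_C_mul_X_coeff, hP j hj, zero_mul]

theorem degree_C_mul_X_pow_sub_comp_C_mul_X_le {R : Type*} [CommRing R] {P : R[X]} {k : ℕ}
    {t b : R} (hP : P.degree ≤ (k + 1 : ℕ)) (hPt : P.coeff (k + 1) * b ^ (k + 1) = t) :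
    (C t * X ^ (k + 1) - P.comp (C b * X)).degree ≤ (k : WithBot ℕ) :=
  degree_sub_le_of_coeff_eq (degree_C_mul_X_pow_le _ _) (degree_comp_C_mul_X_le hP _)
    (by rw [coeff_C_mul_X_pow, if_pos rfl, comp_C_mul_X_coeff, hPt])

theorem exists_comp_X_add_one_sub_eq {K : Type*} [Field K] [CharZero K] (k : ℕ) (P : K[X])
    (hP : P.degree ≤ k) : ∃ Q : K[X], Q.degree ≤ (k + 1 : ℕ) ∧
      Q.coeff (k + 1) = P.coeff k / (k + 1) ∧ Q.comp (X + 1) - Q = P := by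
  induction k generalizing P with
  | zero =>
    refine ⟨P.coeff 0 • X, (degree_smul_le _ _).trans degree_X_le, by simp, ?_⟩
    conv_rhs => rw [eq_C_of_degree_le_zero hP]
    rw [smul_comp, X_comp, smul_add, add_sub_cancel_left, smul_eq_C_mul, mul_one]
  | succ k ih =>
    -- `a • ((X + 1) ^ (k + 2) - X ^ (k + 2))` is the difference of `a • X ^ (k + 2)` and has
    -- the same top coefficient as `P`, so subtracting it lowers the degree.
    set a : K := P.coeff (k + 1) / (k + 2)
    have hk : (k : K) + 2 ≠ 0 := by exact_mod_cast (k + 1).succ_ne_zero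
    obtain ⟨Q, hQ, -, hQP⟩ := ih (P - a • ((X + 1) ^ (k + 2) - X ^ (k + 2))) <|
      degree_sub_le_of_coeff_eq hP
        ((degree_smul_le _ _).trans (degree_X_add_one_pow_sub_X_pow_le (k + 1)))
        (by
          rw [coeff_smul, coeff_X_add_one_pow_sub_X_pow_self, smul_eq_mul]
          push_cast
          rw [show (k : K) + 1 + 1 = k + 2 by ring, div_mul_cancel₀ _ hk])
    refine ⟨Q + a • X ^ (k + 2), ?_, ?_, ?_⟩
    · exact (degree_add_le _ _).trans <| max_le (hQ.trans (by exact_mod_cast (k + 1).le_succ))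
        ((degree_smul_le _ _).trans (degree_X_pow_le _))
    · have hQ0 : Q.coeff (k + 2) = 0 :=
        coeff_eq_zero_of_degree_lt (hQ.trans_lt (by exact_mod_cast (k + 1).lt_succ_self))
      rw [coeff_add, hQ0, coeff_smul, coeff_X_pow_self, smul_eq_mul, mul_one, zero_add]
      push_cast; ring
    · rw [smul_eq_C_mul] at hQP
      rw [add_comp, smul_comp, X_pow_comp]
      simp only [smul_eq_C_mul]
      linear_combination hQP

end Polynomial

local notation "𝕋" => AddCircle (1 : ℝ)

theorem AddCircle.coe_toCircle_coe (r : ℝ) :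
    (AddCircle.toCircle (r : 𝕋) : ℂ) = Complex.exp (2 * Real.pi * Complex.I * r) := by
  rw [AddCircle.toCircle_apply_mk, Circle.coe_exp]
  push_cast
  ring_nf

section SkewProduct

variable {Y G : Type*} [MeasurableSpace Y] [AddGroup G] [MeasurableSpace G] [MeasurableAdd₂ G]
  [MeasurableNeg G]

def MeasurableEquiv.skewAddRight (R : Y ≃ᵐ Y) {φ : Y → G} (hφ : Measurable φ) :
    Y × G ≃ᵐ Y × G where
  toEquiv := R.toEquiv.prodShear fun y ↦ Equiv.addRight (φ y)
  measurable_toFun :=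
    (R.measurable.comp measurable_fst).prodMk (measurable_snd.add (hφ.comp measurable_fst))
  measurable_invFun :=
    (R.symm.measurable.comp measurable_fst).prodMk
      (measurable_snd.add (hφ.comp (R.symm.measurable.comp measurable_fst)).neg)

theorem MeasureTheory.MeasurePreserving.skewAddRight {ν : Measure Y} {η : Measure G} [SFinite ν]
    [SFinite η] [η.IsAddRightInvariant] {R : Y ≃ᵐ Y} (hR : MeasurePreserving R ν ν) {φ : Y → G}
    (hφ : Measurable φ) : MeasurePreserving (R.skewAddRight hφ) (ν.prod η) (ν.prod η) :=
  hR.skew_product (g := fun y θ ↦ θ + φ y) (measurable_snd.add (hφ.comp measurable_fst))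
    (.of_forall fun y ↦ (measurePreserving_add_right η (φ y)).map_eq)

end SkewProduct

structure PolyPhaseSystem (c : ℝ) (k : ℕ) where
  Y : Type
  [measurableSpace : MeasurableSpace Y]
  ν : Measure Y
  [isProbabilityMeasure : IsProbabilityMeasure ν]
  R : Y ≃ᵐ Y
  measurePreserving : MeasurePreserving R ν ν
  phase : Y → 𝕋
  measurable_phase : Measurable phase
  exists_phase_zpow : ∀ y, ∃ P : ℝ[X], P.degree ≤ k ∧ P.coeff k = c ∧
    ∀ n : ℤ, phase ((R.toEquiv ^ n) y) = ((P.eval (n : ℝ) : ℝ) : 𝕋)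

attribute [instance] PolyPhaseSystem.measurableSpace PolyPhaseSystem.isProbabilityMeasure

namespace PolyPhaseSystem

noncomputable def const (c : ℝ) : PolyPhaseSystem c 0 where
  Y := Unit
  ν := Measure.dirac ()
  R := MeasurableEquiv.refl Unit
  measurePreserving := MeasurePreserving.id _
  phase _ := c
  measurable_phase := measurable_const
  exists_phase_zpow _ := ⟨C c, degree_C_le, coeff_C_zero, fun _ ↦ by rw [eval_C]⟩

variable {c : ℝ} {k : ℕ}

theorem phase_skewProduct_zpow (Z : PolyPhaseSystem c k) (y : Z.Y) (r : ℝ) (P Q : ℝ[X])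
    (hP : ∀ n : ℤ, Z.phase ((Z.R.toEquiv ^ n) y) = ((P.eval (n : ℝ) : ℝ) : 𝕋))
    (hQ : Q.comp (X + 1) - Q = P) (hQr : Q.eval 0 = r) (n : ℤ) :
    (((Z.R.skewAddRight Z.measurable_phase).toEquiv ^ n) (y, r)).2 =
      ((Q.eval (n : ℝ) : ℝ) : 𝕋) := by
  have horbit := Equiv.Perm.zpow_apply_eq_of_apply_add_one
    (Z.R.skewAddRight Z.measurable_phase).toEquiv
    (f := fun n : ℤ ↦ ((Z.R.toEquiv ^ n) y, ((Q.eval (n : ℝ) : ℝ) : 𝕋))) (fun n ↦ ?_) n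
  · simpa [hQr] using congrArg Prod.snd horbit
  · have hdiff : Q.eval ((n : ℝ) + 1) = Q.eval (n : ℝ) + P.eval (n : ℝ) := by
      rw [← hQ]; simp
    ext
    · exact Equiv.Perm.zpow_add_one_apply _ _ _
    · simp only [Int.cast_add, Int.cast_one, hdiff, AddCircle.coe_add]
      rw [← hP n]; rfl

noncomputable def skewProduct (Z : PolyPhaseSystem c k) :
    PolyPhaseSystem (c / (k + 1)) (k + 1) where
  Y := Z.Y × 𝕋
  ν := Z.ν.prod AddCircle.haarAddCircle
  R := Z.R.skewAddRight Z.measurable_phase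
  measurePreserving := Z.measurePreserving.skewAddRight Z.measurable_phase
  phase := Prod.snd
  measurable_phase := measurable_snd
  exists_phase_zpow := by
    rintro ⟨y, θ⟩
    obtain ⟨r, rfl⟩ := QuotientAddGroup.mk_surjective θ
    obtain ⟨P, hPk, hPc, hP⟩ := Z.exists_phase_zpow y
    obtain ⟨Q, hQk, hQc, hQ⟩ := exists_comp_X_add_one_sub_eq k P hPk
    refine ⟨Q + C (r - Q.eval 0), ?_, ?_, Z.phase_skewProduct_zpow y r P _ hP ?_ ?_⟩
    · exact (degree_add_le _ _).trans
        (max_le hQk (degree_C_le.trans (by exact_mod_cast (k + 1).zero_le)))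
    · rw [coeff_add, coeff_C, if_neg k.succ_ne_zero, add_zero, hQc, hPc]
    · rw [add_comp, C_comp, add_sub_add_right_eq_sub, hQ]
    · simp

theorem nonempty (c : ℝ) (k : ℕ) : Nonempty (PolyPhaseSystem c k) := by
  induction k generalizing c with
  | zero => exact ⟨const c⟩
  | succ k ih =>
    obtain ⟨Z⟩ := ih (c * (k + 1))
    rw [← mul_div_cancel_right₀ c (by positivity : (k : ℝ) + 1 ≠ 0)]
    exact ⟨Z.skewProduct⟩

end PolyPhaseSystem

noncomputable def doubleAverage {Ω : Type*} (S : Equiv.Perm Ω) (G₁ G₂ : Ω → ℂ) (a b : ℤ)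
    (w : ℕ → ℂ) (ω : Ω) (N : ℕ) : ℂ :=
  (N : ℂ)⁻¹ * ∑ n ∈ Icc 1 N, G₁ ((S ^ (a * (n : ℤ))) ω) * G₂ ((S ^ (b * (n : ℤ))) ω) * w n

def WienerWintnerUpToDegree (m : ℕ) : Prop :=
  ∀ (Ω : Type u) [MeasurableSpace Ω] (ν : Measure Ω) [IsProbabilityMeasure ν] (S : Ω ≃ᵐ Ω),
    MeasurePreserving S ν ν → ∀ G₁ G₂ : Ω → ℂ, Measurable G₁ → Measurable G₂ →
      (∃ C : ℝ, ∀ ω, ‖G₁ ω‖ ≤ C) → (∃ C : ℝ, ∀ ω, ‖G₂ ω‖ ≤ C) →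
        ∀ a b : ℤ, ∃ V : Set Ω, MeasurableSet V ∧ ν V = 1 ∧
          ∀ ω ∈ V, ∀ q : ℝ[X], q.degree ≤ m → ∃ L, Tendsto
            (doubleAverage S.toEquiv G₁ G₂ a b
              (fun n ↦ Complex.exp (2 * Real.pi * Complex.I * q.eval (n : ℝ))) ω) atTop (nhds L)

theorem ae_exists_tendsto_doubleAverage_monomial_of_measurable {m : ℕ}
    (hyp : WienerWintnerUpToDegree.{u} m) {X : Type u} [MeasurableSpace X] {μ : Measure X}
    [IsProbabilityMeasure μ] {T : X ≃ᵐ X} (hT : MeasurePreserving T μ μ) {g₁ g₂ : X → ℂ}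
    (hg₁ : Measurable g₁) (hg₂ : Measurable g₂) (hC₁ : ∃ C : ℝ, ∀ x, ‖g₁ x‖ ≤ C)
    (hC₂ : ∃ C : ℝ, ∀ x, ‖g₂ x‖ ≤ C) (a : ℤ) {b : ℤ} (hb : b ≠ 0) (t : ℝ) :
    ∀ᵐ x ∂μ, ∃ L, Tendsto (doubleAverage T.toEquiv g₁ g₂ a b
      (fun n ↦ Complex.exp (2 * Real.pi * Complex.I * ((n : ℝ) ^ (m + 1)) * t)) x)
      atTop (nhds L) := by
  obtain ⟨Z⟩ := PolyPhaseSystem.nonempty (t / b ^ (m + 1)) (m + 1)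
  have hχ : Measurable fun θ : 𝕋 ↦ (θ.toCircle : ℂ) :=
    (continuous_induced_dom.comp AddCircle.continuous_toCircle).measurable
  obtain ⟨V, hVm, hV1, hV⟩ := hyp (X × Z.Y) (μ.prod Z.ν) (T.prodCongr Z.R)
    (hT.prod Z.measurePreserving) (fun p ↦ g₁ p.1) (fun p ↦ g₂ p.1 * (Z.phase p.2).toCircle)
    (hg₁.comp measurable_fst)
    ((hg₂.comp measurable_fst).mul (hχ.comp (Z.measurable_phase.comp measurable_snd)))
    (hC₁.imp fun _ h p ↦ h p.1)
    (hC₂.imp fun _ h p ↦ by simpa [Circle.norm_coe] using h p.1) a b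
  have hVae : ∀ᵐ x ∂μ, ∃ y, (x, y) ∈ V :=
    (Measure.ae_ae_of_ae_prod ((mem_ae_iff_prob_eq_one hVm).2 hV1)).mono fun _ h ↦ h.exists
  filter_upwards [hVae] with x ⟨y, hxy⟩
  obtain ⟨P, hPdeg, hPc, hP⟩ := Z.exists_phase_zpow y
  set q := C t * Polynomial.X ^ (m + 1) - P.comp (C (b : ℝ) * Polynomial.X)
  have hq : q.degree ≤ m := degree_C_mul_X_pow_sub_comp_C_mul_X_le hPdeg
    (by rw [hPc, div_mul_cancel₀ _ (pow_ne_zero _ (Int.cast_ne_zero.2 hb))])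
  have hweight (n : ℕ) : ((Z.phase ((Z.R.toEquiv ^ (b * n)) y)).toCircle : ℂ) *
      Complex.exp (2 * Real.pi * Complex.I * q.eval (n : ℝ)) =
      Complex.exp (2 * Real.pi * Complex.I * ((n : ℝ) ^ (m + 1)) * t) := by
    have hqn : q.eval (n : ℝ) = t * (n : ℝ) ^ (m + 1) - P.eval ((b * n : ℤ) : ℝ) := by
      simp [q, eval_comp]
    rw [hP, AddCircle.coe_toCircle_coe, ← Complex.exp_add, hqn]
    push_cast
    ring_nf
  obtain ⟨L, hL⟩ := hV (x, y) hxy q hq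
  refine ⟨L, hL.congr fun N ↦ ?_⟩
  unfold doubleAverage
  congr 1
  refine sum_congr rfl fun n _ ↦ ?_
  simp only [MeasurableEquiv.prodCongr, Equiv.prodCongr_zpow_apply]
  rw [← hweight n]
  ring

theorem ae_eq_doubleAverage_of_ae_eq {X : Type*} [MeasurableSpace X] {μ : Measure X}
    {T : X ≃ᵐ X} (hT : MeasurePreserving T μ μ) {f₁ f₂ g₁ g₂ : X → ℂ} (h₁ : f₁ =ᵐ[μ] g₁)
    (h₂ : f₂ =ᵐ[μ] g₂) (a b : ℤ) (w : ℕ → ℂ) :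
    ∀ᵐ x ∂μ, doubleAverage T.toEquiv f₁ f₂ a b w x = doubleAverage T.toEquiv g₁ g₂ a b w x := by
  have h : ∀ᵐ x ∂μ, ∀ n : ℤ, f₁ ((T.toEquiv ^ n) x) = g₁ ((T.toEquiv ^ n) x) ∧
      f₂ ((T.toEquiv ^ n) x) = g₂ ((T.toEquiv ^ n) x) := ae_all_iff.2 fun n ↦
    ((hT.zpow_toEquiv n).quasiMeasurePreserving.ae_eq h₁).and
      ((hT.zpow_toEquiv n).quasiMeasurePreserving.ae_eq h₂)
  filter_upwards [h] with x hx
  funext N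
  simp only [doubleAverage, (hx _).1, (hx _).2]

theorem ae_exists_tendsto_doubleAverage_monomial {m : ℕ} (hyp : WienerWintnerUpToDegree.{u} m)
    {X : Type u} [MeasurableSpace X] {μ : Measure X} [IsProbabilityMeasure μ] {T : X ≃ᵐ X}
    (hT : MeasurePreserving T μ μ) {f₁ f₂ : X → ℂ} (hf₁ : MemLp f₁ ⊤ μ) (hf₂ : MemLp f₂ ⊤ μ)
    (a : ℤ) {b : ℤ} (hb : b ≠ 0) (t : ℝ) :
    ∀ᵐ x ∂μ, ∃ L, Tendsto (doubleAverage T.toEquiv f₁ f₂ a b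
      (fun n ↦ Complex.exp (2 * Real.pi * Complex.I * ((n : ℝ) ^ (m + 1)) * t)) x)
      atTop (nhds L) := by
  obtain ⟨g₁, hg₁, hC₁, hfg₁⟩ := hf₁.exists_measurable_bounded_ae_eq_s17
  obtain ⟨g₂, hg₂, hC₂, hfg₂⟩ := hf₂.exists_measurable_bounded_ae_eq_s17
  filter_upwards [ae_eq_doubleAverage_of_ae_eq hT hfg₁ hfg₂ a b _,
    ae_exists_tendsto_doubleAverage_monomial_of_measurable hyp hT hg₁ hg₂ hC₁ hC₂ a hb t]
    with x hx hL
  rwa [hx]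

theorem wiener_wintner_monomial_succ_of_deg_le_general
    (m : ℕ)
    (hyp : ∀ (Ω : Type u) [MeasurableSpace Ω] (ν : Measure Ω) [IsProbabilityMeasure ν]
      (S : Ω ≃ᵐ Ω), MeasurePreserving S ν ν →
        ∀ (G1 G2 : Ω → ℂ), Measurable G1 → Measurable G2 →
          (∃ C : ℝ, ∀ ω, ‖G1 ω‖ ≤ C) → (∃ C : ℝ, ∀ ω, ‖G2 ω‖ ≤ C) →
            ∀ a b : ℤ, ∃ V : Set Ω, MeasurableSet V ∧ ν V = 1 ∧
              ∀ ω ∈ V, ∀ q : Polynomial ℝ, q.degree ≤ (m : ℕ) → ∃ L : ℂ,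
                Tendsto (fun N : ℕ => (N : ℂ)⁻¹ * ∑ n ∈ Finset.Icc 1 N,
                    G1 ((S.toEquiv ^ (a * (n : ℤ))) ω) * G2 ((S.toEquiv ^ (b * (n : ℤ))) ω) *
                      Complex.exp (2 * Real.pi * Complex.I * (q.eval (n : ℝ))))
                  atTop (nhds L)) :
    ∀ (X : Type u) [MeasurableSpace X] (μ : Measure X) [IsProbabilityMeasure μ]
      (T : X ≃ᵐ X), MeasurePreserving T μ μ →
        ∀ (f1 f2 : X → ℂ), MemLp f1 ⊤ μ → MemLp f2 ⊤ μ →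
          ∀ (a b : ℤ), a ≠ b → ∀ (t : ℝ),
            ∀ᵐ x ∂μ, ∃ L : ℂ,
              Tendsto (fun N : ℕ => (N : ℂ)⁻¹ * ∑ n ∈ Finset.Icc 1 N,
                  f1 ((T.toEquiv ^ (a * (n : ℤ))) x) * f2 ((T.toEquiv ^ (b * (n : ℤ))) x) *
                    Complex.exp (2 * Real.pi * Complex.I * ((n : ℝ) ^ (m + 1)) * t))
                atTop (nhds L) := by
  intro X _ μ _ T hT f1 f2 hf1 hf2 a b hab t
  rcases eq_or_ne b 0 with rfl | hb
  · filter_upwards [ae_exists_tendsto_doubleAverage_monomial hyp hT hf2 hf1 0 hab t]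
      with x ⟨L, hL⟩
    refine ⟨L, hL.congr fun N ↦ ?_⟩
    unfold doubleAverage
    congr 1
    exact sum_congr rfl fun n _ ↦ by ring
  · exact ae_exists_tendsto_doubleAverage_monomial hyp hT hf1 hf2 a hb t

/-- Inductive step: let `m ≥ 1`. If the Wiener-Wintner double recurrence theorem holds for
polynomial weights of degree at most `m` (for every invertible measure-preserving system and
bounded measurable `G1, G2` there is a full-measure set on which
`(1/N) ∑_{n=1}^N G1(S^{an}ω) G2(S^{bn}ω) e^{2πi q(n)}` converges for every real polynomial `q`
of degree at most `m`), then for any invertible measure-preserving system, `f1, f2 ∈ L^∞(μ)`,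
integers `a ≠ b` and any `t ∈ ℝ`, the averages
`(1/N) ∑_{n=1}^N f1(T^{an}x) f2(T^{bn}x) e^{2πi n^{m+1} t}` converge μ-a.e. -/
theorem wiener_wintner_monomial_succ_of_deg_le
    (m : ℕ) (hm : 1 ≤ m)
    (hyp : ∀ (Ω : Type u) [MeasurableSpace Ω] (ν : Measure Ω) [IsProbabilityMeasure ν]
      (S : Ω ≃ᵐ Ω), MeasurePreserving S ν ν →
        ∀ (G1 G2 : Ω → ℂ), Measurable G1 → Measurable G2 →
          (∃ C : ℝ, ∀ ω, ‖G1 ω‖ ≤ C) → (∃ C : ℝ, ∀ ω, ‖G2 ω‖ ≤ C) →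
            ∀ a b : ℤ, ∃ V : Set Ω, MeasurableSet V ∧ ν V = 1 ∧
              ∀ ω ∈ V, ∀ q : Polynomial ℝ, q.degree ≤ (m : ℕ) → ∃ L : ℂ,
                Tendsto (fun N : ℕ => (N : ℂ)⁻¹ * ∑ n ∈ Finset.Icc 1 N,
                    G1 ((S.toEquiv ^ (a * (n : ℤ))) ω) * G2 ((S.toEquiv ^ (b * (n : ℤ))) ω) *
                      Complex.exp (2 * Real.pi * Complex.I * (q.eval (n : ℝ))))
                  atTop (nhds L)) :
    ∀ (X : Type u) [MeasurableSpace X] (μ : Measure X) [IsProbabilityMeasure μ]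
      (T : X ≃ᵐ X), MeasurePreserving T μ μ →
        ∀ (f1 f2 : X → ℂ), MemLp f1 ⊤ μ → MemLp f2 ⊤ μ →
          ∀ (a b : ℤ), a ≠ b → ∀ (t : ℝ),
            ∀ᵐ x ∂μ, ∃ L : ℂ,
              Tendsto (fun N : ℕ => (N : ℂ)⁻¹ * ∑ n ∈ Finset.Icc 1 N,
                  f1 ((T.toEquiv ^ (a * (n : ℤ))) x) * f2 ((T.toEquiv ^ (b * (n : ℤ))) x) *
                    Complex.exp (2 * Real.pi * Complex.I * ((n : ℝ) ^ (m + 1)) * t))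
                atTop (nhds L) :=
  wiener_wintner_monomial_succ_of_deg_le_general m hyp
end
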